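/- arXiv:1701.07968 — 5 statements merged into one kernel-verified Lean document; each statement's English description precedes it below -/
import Mathlib

section
/- Let (Q,I) be a gentle bound quiver and let α δ₁ δ₂ ⋯ be an infinite path (sequence of composable arrows) in the finite quiver Q such that every consecutive pair of arrows composes to an element of I (i.e., every quadratic factor lies in I). Then some arrow δ_i lies in a saturated cycle of (Q,I), and moreover once one arrow of such a path lies in a saturated cycle, all preceding arrows α, δ₁, …, δ_{i-1} lie in that same saturated cycle. -/
/-- A finite quiver: vertices, arrows, source and target maps. -/
structure Quiv where
  V : Type
  E : Type
  s : E → V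
  t : E → V

namespace Quiv

variable (Q : Quiv)

/-- A list of arrows is a path when consecutive arrows are composable. -/
def IsPath (p : List Q.E) : Prop :=
  List.Chain' (fun a b => Q.t a = Q.s b) p

/-- A path avoids the relation ideal `I` (generated by length-2 paths)
when no two consecutive arrows form a relation. -/
def AvoidsRel (I : Set (Q.E × Q.E)) (p : List Q.E) : Prop :=
  List.Chain' (fun a b => (a, b) ∉ I) p

/-- A saturated cycle: a cyclic sequence of composable arrows all of whose
(cyclically) consecutive compositions lie in `I`. -/
def IsSatCycle (I : Set (Q.E × Q.E)) {n : ℕ} (c : Fin (n + 1) → Q.E) : Prop :=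
  ∀ i : Fin (n + 1), Q.t (c i) = Q.s (c (i + 1)) ∧ (c i, c (i + 1)) ∈ I

/-- An arrow lies in some saturated cycle. -/
def InSatCycle (I : Set (Q.E × Q.E)) (e : Q.E) : Prop :=
  ∃ (n : ℕ) (c : Fin (n + 1) → Q.E), Q.IsSatCycle I c ∧ ∃ i, c i = e

/-- The conditions for `(Q, I)` to be a gentle bound quiver:
`I` consists of composable pairs (length-2 paths) — (G2) —, at most two
arrows in and out of each vertex (G1), and the uniqueness conditions (G3), (G4). -/
structure IsGentle (I : Set (Q.E × Q.E)) : Prop where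
  compat : ∀ p ∈ I, Q.t (Prod.fst p) = Q.s (Prod.snd p)
  g1out : ∀ (x : Q.V) (a b c : Q.E),
    Q.s a = x → Q.s b = x → Q.s c = x → a = b ∨ a = c ∨ b = c
  g1in : ∀ (x : Q.V) (a b c : Q.E),
    Q.t a = x → Q.t b = x → Q.t c = x → a = b ∨ a = c ∨ b = c
  g3l : ∀ β α α', (α, β) ∈ I → (α', β) ∈ I → α = α'
  g3r : ∀ β γ γ', (β, γ) ∈ I → (β, γ') ∈ I → γ = γ'
  g4l : ∀ β α α', Q.t α = Q.s β → Q.t α' = Q.s β → (α, β) ∉ I → (α', β) ∉ I → α = α'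
  g4r : ∀ β γ γ', Q.t β = Q.s γ → Q.t β = Q.s γ' → (β, γ) ∉ I → (β, γ') ∉ I → γ = γ'

end Quiv

open Quiv in
/-- In a finite gentle bound quiver, an infinite path `α = f 0, δ₁ = f 1, δ₂ = f 2, …`
all of whose quadratic factors lie in `I` must meet a saturated cycle; moreover, if some
arrow `f i` of such a path lies in a saturated cycle `c`, then all the preceding arrows
`f k` (`k ≤ i`) lie in that same saturated cycle. -/
theorem stmt3 (Q : Quiv) (I : Set (Q.E × Q.E)) [Finite Q.E] (hg : Q.IsGentle I)
    (f : ℕ → Q.E) (hcomp : ∀ i, Q.t (f i) = Q.s (f (i + 1)))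
    (hrel : ∀ i, (f i, f (i + 1)) ∈ I) :
    (∃ i, Q.InSatCycle I (f i)) ∧
    (∀ (i n : ℕ) (c : Fin (n + 1) → Q.E), Q.IsSatCycle I c →
      (∃ j, c j = f i) → ∀ k ≤ i, ∃ j, c j = f k) := by
  constructor
  · -- existence: f is not injective
    obtain ⟨a, b, hab, hfab⟩ := Finite.exists_ne_map_eq_of_infinite f
    -- wlog a < b
    rcases Nat.lt_or_ge a b with hlt | hge
    · obtain ⟨n, hn⟩ : ∃ n, b = a + n + 1 := ⟨b - a - 1, by omega⟩
      refine ⟨a, n, fun k => f (a + k), ?_, ⟨0, by simp⟩⟩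
      intro k
      by_cases hk : (k : ℕ) < n
      · have h1 : ((k + 1 : Fin (n + 1)) : ℕ) = (k : ℕ) + 1 :=
          Fin.val_add_one_of_lt (by simpa [Fin.lt_iff_val_lt_val] using hk)
        simp only [h1]
        exact ⟨by simpa [Nat.add_assoc] using hcomp (a + k),
               by simpa [Nat.add_assoc] using hrel (a + k)⟩
      · have hk' : (k : ℕ) = n := by omega
        have hklast : k = Fin.last n := Fin.ext hk'
        have h1 : (k + 1 : Fin (n + 1)) = 0 := by
          rw [hklast]; exact Fin.last_add_one n
        simp only [h1, hk', Fin.val_zero, Nat.add_zero]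
        rw [hfab, hn]
        exact ⟨hcomp (a + n), hrel (a + n)⟩
    · have hlt : b < a := by omega
      obtain ⟨n, hn⟩ : ∃ n, a = b + n + 1 := ⟨a - b - 1, by omega⟩
      refine ⟨b, n, fun k => f (b + k), ?_, ⟨0, by simp⟩⟩
      intro k
      by_cases hk : (k : ℕ) < n
      · have h1 : ((k + 1 : Fin (n + 1)) : ℕ) = (k : ℕ) + 1 :=
          Fin.val_add_one_of_lt (by simpa [Fin.lt_iff_val_lt_val] using hk)
        simp only [h1]
        exact ⟨by simpa [Nat.add_assoc] using hcomp (b + k),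
               by simpa [Nat.add_assoc] using hrel (b + k)⟩
      · have hk' : (k : ℕ) = n := by omega
        have hklast : k = Fin.last n := Fin.ext hk'
        have h1 : (k + 1 : Fin (n + 1)) = 0 := by
          rw [hklast]; exact Fin.last_add_one n
        simp only [h1, hk', Fin.val_zero, Nat.add_zero]
        rw [← hfab, hn]
        exact ⟨hcomp (b + n), hrel (b + n)⟩
  · -- backward propagation
    intro i n c hc ⟨j0, hj0⟩ k hk
    have aux : ∀ d, ∃ j, c j = f (i - d) := by
      intro d
      induction d with
      | zero => exact ⟨j0, by simpa using hj0⟩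
      | succ d ih =>
        obtain ⟨j, hj⟩ := ih
        rcases Nat.eq_zero_or_pos (i - d) with h0 | hpos
        · refine ⟨j, ?_⟩
          have : i - (d + 1) = i - d := by omega
          rw [this, hj]
        · have hm : (i - (d + 1)) + 1 = i - d := by omega
          have hrel2 : (c (j - 1), c j) ∈ I := by
            have := (hc (j - 1)).2
            simpa using this
          have hrel1 : (f (i - (d + 1)), f (i - d)) ∈ I := by
            rw [← hm]; exact hrel (i - (d + 1))
          rw [hj] at hrel2
          exact ⟨j - 1, (hg.g3l (f (i - d)) _ _ hrel2 hrel1).symm ▸ rfl⟩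
    obtain ⟨j, hj⟩ := aux (i - k)
    have : i - (i - k) = k := by omega
    rw [this] at hj
    exact ⟨j, hj⟩
end

section
/- Let (Q,I) be a finite gentle bound quiver in which the maximal length of a critical path is at most 1 (equivalently, for every gentle arrow α there is no arrow β with αβ ∈ I). Then every zero-relation (length-2 path in the generating set of I) lies in a saturated cycle. -/
open Quiv in
/-- Let `(Q, I)` be a finite gentle bound quiver in which every critical path has length
at most 1: for every gentle arrow `α` (one with no `γ` such that `γα ∈ I`) there is no
arrow `β` with `αβ ∈ I`.  Then every zero-relation `(a, b) ∈ I` lies in a saturated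
cycle, as a pair of consecutive arrows of the cycle. -/
theorem stmt4 (Q : Quiv) (I : Set (Q.E × Q.E)) [Finite Q.E] (hg : Q.IsGentle I)
    (hn1 : ∀ α : Q.E, (∀ γ, (γ, α) ∉ I) → ∀ β, (α, β) ∉ I) :
    ∀ a b : Q.E, (a, b) ∈ I →
      ∃ (n : ℕ) (c : Fin (n + 1) → Q.E) (i : Fin (n + 1)),
        Q.IsSatCycle I c ∧ c i = a ∧ c (i + 1) = b := by
  classical
  intro a b hab
  -- The set of arrows having a successor relation in I
  let S := {e : Q.E // ∃ β, (e, β) ∈ I}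
  have hSfin : Finite S := Subtype.finite
  have hstep : ∀ e : S, ∃ γ : S, (γ.val, e.val) ∈ I := by
    rintro ⟨e, β, hβ⟩
    by_contra h
    push_neg at h
    refine hn1 e (fun γ hγ => h ⟨γ, e, hγ⟩ hγ) β hβ
  choose pred hpred using hstep
  have hinj : Function.Injective pred := by
    intro x y hxy
    have h1 := hpred x
    have h2 := hpred y
    rw [hxy] at h1
    exact Subtype.ext (hg.g3r _ _ _ h1 h2)
  let a' : S := ⟨a, b, hab⟩
  let d : ℕ → S := fun k => pred^[k] a'
  have hd : ∀ k, ((d (k + 1)).val, (d k).val) ∈ I := by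
    intro k
    have : d (k + 1) = pred (d k) := Function.iterate_succ_apply' pred k a'
    rw [this]
    exact hpred (d k)
  -- find a period
  obtain ⟨i, j, hij, heq⟩ := Finite.exists_ne_map_eq_of_infinite d
  have key : ∃ m, 0 < m ∧ d m = a' := by
    wlog h : i < j generalizing i j
    · exact this j i hij.symm heq.symm (by omega)
    refine ⟨j - i, by omega, ?_⟩
    have : d j = pred^[i] (pred^[j - i] a') := by
      show pred^[j] a' = _
      rw [← Function.iterate_add_apply]
      congr 1
      omega
    have h2 : pred^[i] (pred^[j - i] a') = pred^[i] a' := by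
      rw [← this]; exact heq.symm
    exact hinj.iterate i h2
  obtain ⟨m, hm, hma⟩ := key
  obtain ⟨n, rfl⟩ : ∃ n, m = n + 1 := ⟨m - 1, by omega⟩
  have hdn : ((d (n + 1)).val, (d n).val) ∈ I := hd n
  rw [hma] at hdn
  have hb : (d n).val = b := hg.g3r a _ b hdn hab
  refine ⟨n, fun j => (d (n - j.val)).val, Fin.last n, ?_, ?_, ?_⟩
  · intro i
    have hmem : ((d (n - i.val)).val, (d (n - (i + 1 : Fin (n+1)).val)).val) ∈ I := by
      rcases Nat.lt_or_ge i.val n with h | h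
      · have h1 : ((i + 1 : Fin (n+1)).val) = i.val + 1 :=
          Fin.val_add_one_of_lt (by simpa [Fin.lt_def] using h)
        rw [h1]
        have : n - i.val = (n - (i.val + 1)) + 1 := by omega
        rw [this]
        exact hd _
      · have h1 : i = Fin.last n := by
          apply Fin.ext
          have := i.isLt
          simp [Fin.last]; omega
        subst h1
        have h2 : ((Fin.last n + 1 : Fin (n+1)).val) = 0 := by
          simp [Fin.last_add_one]
        rw [h2]
        simp only [Fin.val_last, Nat.sub_self, Nat.sub_zero]
        show ((d 0).val, (d n).val) ∈ I
        have : d 0 = a' := rfl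
        rw [this, ← hma]
        exact hd n
    exact ⟨hg.compat _ hmem, hmem⟩
  · simp only [Fin.val_last, Nat.sub_self]
    rfl
  · have h2 : ((Fin.last n + 1 : Fin (n+1)).val) = 0 := by
      simp [Fin.last_add_one]
    show (d (n - ((Fin.last n + 1 : Fin (n+1)).val))).val = b
    rw [h2]
    simpa using hb
end

section
/- Let (Q,I) be a finite gentle bound quiver, where a critical path starts with a gentle arrow. If in (Q,I) at most m−1 consecutive zero-relations occur outside saturated cycles, then the maximal critical path length n(Λ) satisfies n(Λ) ≤ m. -/
open Quiv in
/-- Let `(Q, I)` be a finite gentle bound quiver in which any path formed by consecutive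
relations, none of whose arrows lies in a saturated cycle, has at most `m` arrows
(i.e. at most `m − 1` consecutive zero-relations occur outside saturated cycles).
Then every critical path — a path formed by consecutive relations whose first arrow is
gentle — has at most `m` arrows; consequently `n(Λ) ≤ m`. -/
theorem stmt5 (Q : Quiv) (I : Set (Q.E × Q.E)) [Finite Q.E] (hg : Q.IsGentle I)
    (m : ℕ) (hm : 1 ≤ m)
    (hout : ∀ p : List Q.E, Q.IsPath p → List.Chain' (fun a b => (a, b) ∈ I) p →
      (∀ e ∈ p, ¬ Q.InSatCycle I e) → p.length ≤ m) :
    ∀ p : List Q.E, Q.IsPath p → List.Chain' (fun a b => (a, b) ∈ I) p →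
      (∀ e, p.head? = some e → ∀ γ, (γ, e) ∉ I) → p.length ≤ m := by
  intro p hp hrel hcrit
  apply hout p hp hrel
  have key : ∀ i (hi : i < p.length), ¬ Q.InSatCycle I (p.get ⟨i, hi⟩) := by
    intro i
    induction i with
    | zero =>
      intro hi ⟨n, c, hc, j, hj⟩
      have hrel2 : (c (j - 1), c j) ∈ I := by
        have := (hc (j - 1)).2
        rwa [sub_add_cancel] at this
      rw [hj] at hrel2
      refine hcrit _ ?_ _ hrel2
      exact List.head?_eq_getElem?.trans (List.getElem?_eq_getElem hi)
    | succ k ih =>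
      intro hi ⟨n, c, hc, j, hj⟩
      have hk : k < p.length := Nat.lt_of_succ_lt hi
      have hrel1 : (p.get ⟨k, hk⟩, p.get ⟨k + 1, hi⟩) ∈ I :=
        List.isChain_iff_getElem.mp hrel k (by omega)
      have hrel2 : (c (j - 1), c j) ∈ I := by
        have := (hc (j - 1)).2
        rwa [sub_add_cancel] at this
      rw [hj] at hrel2
      have := hg.g3l _ _ _ hrel1 hrel2
      exact ih hk ⟨n, c, hc, j - 1, this.symm⟩
  intro e he
  obtain ⟨i, rfl⟩ := List.mem_iff_get.mp he
  exact key i.1 i.2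
end

section
/- Let (Q,I) be a finite gentle bound quiver in which every generator of I either equals δ² for some loop δ, or lies in a saturated 3-cycle with three distinct vertices. Then (Q,I) is gentle-block-decomposable: it can be obtained by taking a disjoint union of blocks of type I (a single arrow with no relation), type II (a 3-cycle α,β,γ with αβ = βγ = γα = 0), and type loop (a loop δ with δ² = 0), and gluing vertices along a partial matching of vertices such that (1) no two vertices of the same block are matched, (2) no two loop-block vertices are matched, and (3) no two arrows connect the same pair of vertices in opposite directions after gluing. -/
/-- The three block types: type I (a single arrow), type II (a 3-cycle with relations
`αβ = βγ = γα = 0`), and type loop (a loop `δ` with `δ² = 0`). -/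
inductive BlockType
  | typeI | typeII | typeLoop

/-- A gentle-block decomposition of a bound quiver `(Q, I)`: a partition of the arrows
into blocks of type I, II and loop, realizing `(Q, I)` as obtained from the disjoint
union of the blocks by gluing vertices along a partial matching such that
(1) no two vertices of the same block are matched (within each block the vertices stay
distinct, and each vertex of `Q` meets at most two blocks),
(2) no two loop-block vertices are matched, and
(3) after gluing no two arrows connect the same pair of vertices in opposite
directions. -/
structure GentleBlockDecomposition (Q : Quiv) (I : Set (Q.E × Q.E)) where
  /-- the set of blocks -/
  B : Type
  /-- the type of each block -/
  btype : B → BlockType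
  /-- the block containing each arrow -/
  blk : Q.E → B
  /-- a type-I block consists of a single arrow, with distinct endpoints -/
  typeI_arrows : ∀ b, btype b = BlockType.typeI →
    ∃ e, Q.s e ≠ Q.t e ∧ ∀ e', blk e' = b ↔ e' = e
  /-- a type-II block consists of a 3-cycle on three distinct vertices,
  with all three consecutive compositions in `I` -/
  typeII_arrows : ∀ b, btype b = BlockType.typeII →
    ∃ e₁ e₂ e₃ : Q.E, (∀ e', blk e' = b ↔ (e' = e₁ ∨ e' = e₂ ∨ e' = e₃)) ∧
      e₁ ≠ e₂ ∧ e₂ ≠ e₃ ∧ e₁ ≠ e₃ ∧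
      Q.t e₁ = Q.s e₂ ∧ Q.t e₂ = Q.s e₃ ∧ Q.t e₃ = Q.s e₁ ∧
      Q.s e₁ ≠ Q.s e₂ ∧ Q.s e₂ ≠ Q.s e₃ ∧ Q.s e₁ ≠ Q.s e₃ ∧
      (e₁, e₂) ∈ I ∧ (e₂, e₃) ∈ I ∧ (e₃, e₁) ∈ I
  /-- a type-loop block consists of a single loop `δ` with `δ² ∈ I` -/
  typeLoop_arrows : ∀ b, btype b = BlockType.typeLoop →
    ∃ e, Q.s e = Q.t e ∧ (e, e) ∈ I ∧ ∀ e', blk e' = b ↔ e' = e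
  /-- the relations of `I` are exactly the within-block relations listed above -/
  rel_in_blocks : ∀ p ∈ I, blk (Prod.fst p) = blk (Prod.snd p) ∧
    (btype (blk (Prod.fst p)) = BlockType.typeII ∨
      (Prod.fst p = Prod.snd p ∧ btype (blk (Prod.fst p)) = BlockType.typeLoop))
  /-- partial matching: each vertex of `Q` is incident to at most two blocks -/
  vertex_two_blocks : ∀ (v : Q.V) (b₁ b₂ b₃ : B),
    (∃ e, blk e = b₁ ∧ (Q.s e = v ∨ Q.t e = v)) →
    (∃ e, blk e = b₂ ∧ (Q.s e = v ∨ Q.t e = v)) →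
    (∃ e, blk e = b₃ ∧ (Q.s e = v ∨ Q.t e = v)) →
    b₁ = b₂ ∨ b₁ = b₃ ∨ b₂ = b₃
  /-- no two loop-block vertices are matched -/
  loops_unmatched : ∀ (v : Q.V) (b₁ b₂ : B),
    btype b₁ = BlockType.typeLoop → btype b₂ = BlockType.typeLoop →
    (∃ e, blk e = b₁ ∧ (Q.s e = v ∨ Q.t e = v)) →
    (∃ e, blk e = b₂ ∧ (Q.s e = v ∨ Q.t e = v)) → b₁ = b₂
  /-- after gluing, no two arrows connect the same pair of vertices in opposite
  directions -/
  no_two_cycles : ∀ a b : Q.E, Q.s a = Q.t b → Q.t a = Q.s b → Q.s a = Q.t a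

namespace Quiv

variable {Q : Quiv} {I : Set (Q.E × Q.E)}

/-- The paths that are nonzero in `kQ/I`; `(Q, I)` is finite dimensional when there are finitely
many. -/
def nonzeroPaths (Q : Quiv) (I : Set (Q.E × Q.E)) : Set (List Q.E) :=
  {p | p ≠ [] ∧ Q.IsPath p ∧ Q.AvoidsRel I p}

theorem nonzeroPaths_infinite_of_walk (w : ℕ → Q.E) (hw : ∀ m, Q.t (w m) = Q.s (w (m + 1)))
    (hwI : ∀ m, (w m, w (m + 1)) ∉ I) : (Q.nonzeroPaths I).Infinite := by
  have hinj : Function.Injective fun n => (List.range (n + 1)).map w := fun m n h => by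
    simpa using congrArg List.length h
  refine Set.infinite_of_injective_forall_mem hinj fun n => ⟨by simp, ?_, ?_⟩
  · exact (List.isChain_map w).2 ((List.isChain_range_succ _ n).2 fun m _ => hw m)
  · exact (List.isChain_map w).2 ((List.isChain_range_succ _ n).2 fun m _ => hwI m)

/-- Going around an oriented 2-cycle (or loop) without relations forever would give infinitely
many nonzero paths. -/
theorem mem_or_mem_of_cycle (hfd : (Q.nonzeroPaths I).Finite) {a b : Q.E}
    (hab : Q.t a = Q.s b) (hba : Q.t b = Q.s a) : (a, b) ∈ I ∨ (b, a) ∈ I := by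
  by_contra! h
  refine nonzeroPaths_infinite_of_walk (fun m => if Even m then a else b) (fun m => ?_)
    (fun m => ?_) hfd <;>
  by_cases hm : Even m <;> simp [hm, Nat.even_add_one, hab, hba, h.1, h.2]

def RelsLoopOrTriangle (Q : Quiv) (I : Set (Q.E × Q.E)) : Prop :=
  ∀ p ∈ I,
    (Prod.fst p = Prod.snd p ∧ Q.s (Prod.fst p) = Q.t (Prod.fst p)) ∨
    (∃ c : Fin (2 + 1) → Q.E, Q.IsSatCycle I c ∧
      (Function.Injective fun i => Q.s (c i)) ∧
      ∃ i, c i = Prod.fst p ∧ c (i + 1) = Prod.snd p)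

structure IsSatTriangle (Q : Quiv) (I : Set (Q.E × Q.E)) (a b c : Q.E) : Prop where
  t_a : Q.t a = Q.s b
  t_b : Q.t b = Q.s c
  t_c : Q.t c = Q.s a
  mem_ab : (a, b) ∈ I
  mem_bc : (b, c) ∈ I
  mem_ca : (c, a) ∈ I
  s_ab : Q.s a ≠ Q.s b
  s_bc : Q.s b ≠ Q.s c
  s_ac : Q.s a ≠ Q.s c

theorem isSatTriangle_of_isSatCycle {c : Fin 3 → Q.E} (hc : Q.IsSatCycle I c)
    (hinj : Function.Injective fun i => Q.s (c i)) (i : Fin 3) :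
    Q.IsSatTriangle I (c i) (c (i + 1)) (c (i + 1 + 1)) := by
  have hi : i + 1 + 1 + 1 = i := by fin_cases i <;> rfl
  have hc' := hc (i + 1 + 1)
  rw [hi] at hc'
  exact ⟨(hc i).1, (hc (i + 1)).1, hc'.1, (hc i).2, (hc (i + 1)).2, hc'.2,
    hinj.ne (by fin_cases i <;> decide), hinj.ne (by fin_cases i <;> decide),
    hinj.ne (by fin_cases i <;> decide)⟩

theorem RelsLoopOrTriangle.loop_or_triangle (hrel : Q.RelsLoopOrTriangle I) {a b : Q.E}
    (hab : (a, b) ∈ I) : (a = b ∧ Q.s a = Q.t a) ∨ ∃ c, Q.IsSatTriangle I a b c := by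
  obtain h | ⟨c, hc, hinj, i, rfl, rfl⟩ := hrel (a, b) hab
  · exact Or.inl h
  · exact Or.inr ⟨_, isSatTriangle_of_isSatCycle hc hinj i⟩

def Linked (I : Set (Q.E × Q.E)) (a b : Q.E) : Prop := a = b ∨ (a, b) ∈ I ∨ (b, a) ∈ I

theorem Linked.symm {a b : Q.E} : Q.Linked I a b → Q.Linked I b a := by
  rintro (rfl | h | h)
  exacts [Or.inl rfl, Or.inr (Or.inr h), Or.inr (Or.inl h)]

theorem Linked.trans (hg : Q.IsGentle I) (hrel : Q.RelsLoopOrTriangle I) {a b c : Q.E} :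
    Q.Linked I a b → Q.Linked I b c → Q.Linked I a c := by
  rintro (rfl | hab | hba) hbc
  · exact hbc
  · rcases hbc with rfl | hbc | hcb
    · exact Or.inr (Or.inl hab)
    · obtain ⟨rfl, -⟩ | ⟨x, hx⟩ := hrel.loop_or_triangle hab
      · exact Or.inr (Or.inl hbc)
      · exact Or.inr (Or.inr (hg.g3r b c x hbc hx.mem_bc ▸ hx.mem_ca))
    · exact Or.inl (hg.g3l b a c hab hcb)
  · rcases hbc with rfl | hbc | hcb
    · exact Or.inr (Or.inr hba)
    · exact Or.inl (hg.g3r b a c hba hbc)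
    · obtain ⟨rfl, -⟩ | ⟨x, hx⟩ := hrel.loop_or_triangle hcb
      · exact Or.inr (Or.inr hba)
      · exact Or.inr (Or.inl (hg.g3r b a x hba hx.mem_bc ▸ hx.mem_ca))

theorem IsGentle.eq_of_linked_loop (hg : Q.IsGentle I) {e f : Q.E} (he : (e, e) ∈ I) :
    Q.Linked I f e → f = e := by
  rintro (rfl | h | h)
  exacts [rfl, hg.g3l e f e h he, hg.g3r e f e h he]

abbrev Block (Q : Quiv) (I : Set (Q.E × Q.E)) : Type := Quot (Q.Linked I)

abbrev block (I : Set (Q.E × Q.E)) (e : Q.E) : Q.Block I := Quot.mk _ e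

theorem linked_equivalence (hg : Q.IsGentle I) (hrel : Q.RelsLoopOrTriangle I) :
    Equivalence (Q.Linked I) :=
  ⟨fun _ => Or.inl rfl, Linked.symm, Linked.trans hg hrel⟩

theorem block_eq_block_iff (hg : Q.IsGentle I) (hrel : Q.RelsLoopOrTriangle I) {a b : Q.E} :
    block I a = block I b ↔ Q.Linked I a b :=
  ⟨fun h => (linked_equivalence hg hrel).eqvGen_iff.1 (Quot.eqvGen_exact h), Quot.sound⟩

theorem IsGentle.block_eq_of_in_out_out (hg : Q.IsGentle I) {v : Q.V} {z x y : Q.E}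
    (hz : Q.t z = v) (hx : Q.s x = v) (hy : Q.s y = v) :
    block I z = block I x ∨ block I z = block I y ∨ x = y := by
  by_cases hzx : (z, x) ∈ I
  · exact Or.inl (Quot.sound (Or.inr (Or.inl hzx)))
  by_cases hzy : (z, y) ∈ I
  · exact Or.inr (Or.inl (Quot.sound (Or.inr (Or.inl hzy))))
  exact Or.inr (Or.inr (hg.g4r z x y (hz.trans hx.symm) (hz.trans hy.symm) hzx hzy))

theorem IsGentle.block_eq_of_out_in_in (hg : Q.IsGentle I) {v : Q.V} {z x y : Q.E}
    (hz : Q.s z = v) (hx : Q.t x = v) (hy : Q.t y = v) :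
    block I x = block I z ∨ block I y = block I z ∨ x = y := by
  by_cases hxz : (x, z) ∈ I
  · exact Or.inl (Quot.sound (Or.inr (Or.inl hxz)))
  by_cases hyz : (y, z) ∈ I
  · exact Or.inr (Or.inl (Quot.sound (Or.inr (Or.inl hyz))))
  exact Or.inr (Or.inr (hg.g4l z x y (hx.trans hz.symm) (hy.trans hz.symm) hxz hyz))

theorem IsGentle.block_eq_of_incident (hg : Q.IsGentle I) {v : Q.V} {x y z : Q.E}
    (hx : Q.s x = v ∨ Q.t x = v) (hy : Q.s y = v ∨ Q.t y = v) (hz : Q.s z = v ∨ Q.t z = v) :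
    block I x = block I y ∨ block I x = block I z ∨ block I y = block I z := by
  rcases hx with hx | hx <;> rcases hy with hy | hy <;> rcases hz with hz | hz
  · have := hg.g1out v x y z hx hy hz; grind
  · have := hg.block_eq_of_in_out_out hz hx hy; grind
  · have := hg.block_eq_of_in_out_out hy hx hz; grind
  · have := hg.block_eq_of_out_in_in hx hy hz; grind
  · have := hg.block_eq_of_in_out_out hx hy hz; grind
  · have := hg.block_eq_of_out_in_in hy hx hz; grind
  · have := hg.block_eq_of_out_in_in hz hx hy; grind
  · have := hg.g1in v x y z hx hy hz; grind

theorem IsGentle.eq_of_loops_at (hg : Q.IsGentle I) (hfd : (Q.nonzeroPaths I).Finite)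
    {e f : Q.E} (he : (e, e) ∈ I) (hf : (f, f) ∈ I) (hef : Q.s e = Q.s f) : e = f := by
  have hte := hg.compat _ he
  have htf := hg.compat _ hf
  obtain h | h := mem_or_mem_of_cycle hfd (a := e) (b := f) (by grind) (by grind)
  exacts [(hg.g3r e f e h he).symm, (hg.g3l e f e h he).symm]

theorem RelsLoopOrTriangle.src_eq_tgt_of_cycle (hrel : Q.RelsLoopOrTriangle I)
    (hfd : (Q.nonzeroPaths I).Finite) {a b : Q.E} (hab : Q.s a = Q.t b) (hba : Q.t a = Q.s b) :
    Q.s a = Q.t a := by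
  obtain h | h := mem_or_mem_of_cycle hfd hba hab.symm
  · obtain ⟨-, hloop⟩ | ⟨x, hx⟩ := hrel.loop_or_triangle h
    · exact hloop
    · exact absurd (hab.trans hx.t_b) hx.s_ac
  · obtain ⟨rfl, hloop⟩ | ⟨x, hx⟩ := hrel.loop_or_triangle h
    · exact hloop
    · exact absurd (hba.symm.trans hx.t_b) hx.s_ac

open Classical in
noncomputable def blockType (b : Q.Block I) : BlockType :=
  if ∃ e, block I e = b ∧ (e, e) ∈ I then .typeLoop
  else if ∃ e f, block I e = b ∧ (e, f) ∈ I then .typeII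
  else .typeI

theorem blockType_block_eq_typeLoop_iff (hg : Q.IsGentle I) (hrel : Q.RelsLoopOrTriangle I)
    {e : Q.E} : blockType (block I e) = .typeLoop ↔ (e, e) ∈ I := by
  refine ⟨fun h => ?_, fun he => if_pos ⟨e, rfl, he⟩⟩
  unfold blockType at h
  split_ifs at h with hloop
  obtain ⟨f, hfe, hf⟩ := hloop
  rwa [hg.eq_of_linked_loop hf ((block_eq_block_iff hg hrel).1 hfe).symm]

theorem IsSatTriangle.blockType_eq (hg : Q.IsGentle I) (hrel : Q.RelsLoopOrTriangle I)
    {a b c : Q.E} (h : Q.IsSatTriangle I a b c) : blockType (block I a) = .typeII := by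
  have hnot : blockType (block I a) ≠ .typeLoop := fun ha => h.s_ab (congrArg Q.s
    (hg.g3r a b a h.mem_ab ((blockType_block_eq_typeLoop_iff hg hrel).1 ha)).symm)
  unfold blockType at hnot ⊢
  rw [if_neg fun hloop => hnot (if_pos hloop), if_pos ⟨a, b, rfl, h.mem_ab⟩]

theorem typeI_arrows (hg : Q.IsGentle I) (hrel : Q.RelsLoopOrTriangle I)
    (hfd : (Q.nonzeroPaths I).Finite) (b : Q.Block I) (hb : blockType b = .typeI) :
    ∃ e, Q.s e ≠ Q.t e ∧ ∀ e', block I e' = b ↔ e' = e := by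
  unfold blockType at hb
  split_ifs at hb with hloop hrelb
  obtain ⟨e, rfl⟩ := Quot.exists_rep b
  refine ⟨e, fun hst => ?_, fun e' => ⟨fun he' => ?_, fun h => h ▸ rfl⟩⟩
  · obtain h | h := mem_or_mem_of_cycle hfd hst.symm hst.symm
    exacts [hloop ⟨e, rfl, h⟩, hloop ⟨e, rfl, h⟩]
  · obtain h | h | h := (block_eq_block_iff hg hrel).1 he'
    exacts [h, (hrelb ⟨e', e, he', h⟩).elim, (hrelb ⟨e, e', rfl, h⟩).elim]

theorem typeII_arrows (hg : Q.IsGentle I) (hrel : Q.RelsLoopOrTriangle I) (b : Q.Block I)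
    (hb : blockType b = .typeII) :
    ∃ e₁ e₂ e₃ : Q.E, (∀ e', block I e' = b ↔ (e' = e₁ ∨ e' = e₂ ∨ e' = e₃)) ∧
      e₁ ≠ e₂ ∧ e₂ ≠ e₃ ∧ e₁ ≠ e₃ ∧
      Q.t e₁ = Q.s e₂ ∧ Q.t e₂ = Q.s e₃ ∧ Q.t e₃ = Q.s e₁ ∧
      Q.s e₁ ≠ Q.s e₂ ∧ Q.s e₂ ≠ Q.s e₃ ∧ Q.s e₁ ≠ Q.s e₃ ∧
      (e₁, e₂) ∈ I ∧ (e₂, e₃) ∈ I ∧ (e₃, e₁) ∈ I := by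
  unfold blockType at hb
  split_ifs at hb with hloop hrelb
  obtain ⟨e, f, rfl, hef⟩ := hrelb
  obtain ⟨rfl, -⟩ | ⟨x, hx⟩ := hrel.loop_or_triangle hef
  · exact absurd ⟨e, rfl, hef⟩ hloop
  refine ⟨e, f, x, fun e' => ⟨fun he' => ?_, ?_⟩, fun h => hx.s_ab (h ▸ rfl),
    fun h => hx.s_bc (h ▸ rfl), fun h => hx.s_ac (h ▸ rfl), hx.t_a, hx.t_b, hx.t_c,
    hx.s_ab, hx.s_bc, hx.s_ac, hx.mem_ab, hx.mem_bc, hx.mem_ca⟩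
  · obtain h | h | h := (block_eq_block_iff hg hrel).1 he'
    exacts [Or.inl h, Or.inr (Or.inr (hg.g3l e e' x h hx.mem_ca)),
      Or.inr (Or.inl (hg.g3r e e' f h hx.mem_ab))]
  · rintro (rfl | rfl | rfl)
    exacts [rfl, (Quot.sound (Or.inr (Or.inr hx.mem_ab))),
      (Quot.sound (Or.inr (Or.inl hx.mem_ca)))]

theorem typeLoop_arrows (hg : Q.IsGentle I) (hrel : Q.RelsLoopOrTriangle I) (b : Q.Block I)
    (hb : blockType b = .typeLoop) :
    ∃ e, Q.s e = Q.t e ∧ (e, e) ∈ I ∧ ∀ e', block I e' = b ↔ e' = e := by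
  obtain ⟨e, rfl⟩ := Quot.exists_rep b
  have he := (blockType_block_eq_typeLoop_iff hg hrel).1 hb
  exact ⟨e, (hg.compat _ he).symm, he, fun e' =>
    ⟨fun h => hg.eq_of_linked_loop he ((block_eq_block_iff hg hrel).1 h), fun h => h ▸ rfl⟩⟩

theorem rel_in_blocks (hg : Q.IsGentle I) (hrel : Q.RelsLoopOrTriangle I) (p : Q.E × Q.E)
    (hp : p ∈ I) : block I p.1 = block I p.2 ∧ (blockType (block I p.1) = .typeII ∨
      (p.1 = p.2 ∧ blockType (block I p.1) = .typeLoop)) := by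
  obtain ⟨a, b⟩ := p
  refine ⟨Quot.sound (Or.inr (Or.inl hp)), ?_⟩
  obtain ⟨rfl, -⟩ | ⟨x, hx⟩ := hrel.loop_or_triangle hp
  · exact Or.inr ⟨rfl, (blockType_block_eq_typeLoop_iff hg hrel).2 hp⟩
  · exact Or.inl (hx.blockType_eq hg hrel)

theorem loops_unmatched (hg : Q.IsGentle I) (hrel : Q.RelsLoopOrTriangle I)
    (hfd : (Q.nonzeroPaths I).Finite) (v : Q.V) (b₁ b₂ : Q.Block I)
    (h₁ : blockType b₁ = .typeLoop) (h₂ : blockType b₂ = .typeLoop)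
    (hv₁ : ∃ e, block I e = b₁ ∧ (Q.s e = v ∨ Q.t e = v))
    (hv₂ : ∃ e, block I e = b₂ ∧ (Q.s e = v ∨ Q.t e = v)) : b₁ = b₂ := by
  obtain ⟨e, rfl, hev⟩ := hv₁
  obtain ⟨f, rfl, hfv⟩ := hv₂
  rw [blockType_block_eq_typeLoop_iff hg hrel] at h₁ h₂
  have := hg.compat _ h₁
  have := hg.compat _ h₂
  rw [hg.eq_of_loops_at hfd h₁ h₂ (by grind)]

end Quiv

open Quiv in
theorem stmt8_general (Q : Quiv) (I : Set (Q.E × Q.E)) (hg : Q.IsGentle I)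
    (hfd : {p : List Q.E | p ≠ [] ∧ Q.IsPath p ∧ Q.AvoidsRel I p}.Finite)
    (hrel : ∀ p ∈ I,
      (Prod.fst p = Prod.snd p ∧ Q.s (Prod.fst p) = Q.t (Prod.fst p)) ∨
      (∃ c : Fin (2 + 1) → Q.E, Q.IsSatCycle I c ∧
        (Function.Injective fun i => Q.s (c i)) ∧
        ∃ i, c i = Prod.fst p ∧ c (i + 1) = Prod.snd p)) :
    Nonempty (GentleBlockDecomposition Q I) :=
  ⟨{ B := Q.Block I
     btype := blockType
     blk := block I
     typeI_arrows := typeI_arrows hg hrel hfd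
     typeII_arrows := typeII_arrows hg hrel
     typeLoop_arrows := typeLoop_arrows hg hrel
     rel_in_blocks := rel_in_blocks hg hrel
     vertex_two_blocks := fun _ _ _ _ ⟨_, h₁, hv₁⟩ ⟨_, h₂, hv₂⟩ ⟨_, h₃, hv₃⟩ =>
       h₁ ▸ h₂ ▸ h₃ ▸ hg.block_eq_of_incident hv₁ hv₂ hv₃
     loops_unmatched := loops_unmatched hg hrel hfd
     no_two_cycles := fun _ _ => RelsLoopOrTriangle.src_eq_tgt_of_cycle hrel hfd }⟩

open Quiv in
/-- Let `(Q, I)` be a finite gentle bound quiver, finite dimensional (only finitely many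
paths avoid `I`), in which every generator of `I` either equals `δ²` for a loop `δ` or
lies in a saturated 3-cycle with three distinct vertices.  Then `(Q, I)` is
gentle-block-decomposable via blocks of type I, II and loop. -/
theorem stmt8 (Q : Quiv) (I : Set (Q.E × Q.E)) [Finite Q.E] (hg : Q.IsGentle I)
    (hfd : {p : List Q.E | p ≠ [] ∧ Q.IsPath p ∧ Q.AvoidsRel I p}.Finite)
    (hrel : ∀ p ∈ I,
      (Prod.fst p = Prod.snd p ∧ Q.s (Prod.fst p) = Q.t (Prod.fst p)) ∨
      (∃ c : Fin (2 + 1) → Q.E, Q.IsSatCycle I c ∧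
        (Function.Injective fun i => Q.s (c i)) ∧
        ∃ i, c i = Prod.fst p ∧ c (i + 1) = Prod.snd p)) :
    Nonempty (GentleBlockDecomposition Q I) :=
  stmt8_general Q I hg hfd hrel
end

section
/- Let (Q,I) be the bound quiver obtained from an (m+2)-angulation T of a polygon: vertices of Q are the m-diagonals of T; there is an arrow i → j when diagonals x_i, x_j share an endpoint, bound the same (m+2)-gon of the angulation, and x_i follows x_j clockwise; and a length-2 path i → j → k lies in I iff x_i, x_j, x_k bound the same (m+2)-gon. Then (Q,I) is a gentle bound quiver, and every saturated cycle of (Q,I) has length exactly m+2. -/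
/-- A combinatorial model of an `(m+2)`-angulation `T` of a polygon: a set of pieces
(the `(m+2)`-gons of the angulation), each with `m+2` cyclically ordered sides, each side
being either an `m`-diagonal of `T` (`some d`) or a boundary edge of the polygon
(`none`); every `m`-diagonal occurs as a side of exactly two distinct pieces, once in
each. -/
structure Angulation (m : ℕ) where
  /-- the `(m+2)`-gon pieces of the angulation -/
  Piece : Type
  /-- the `m`-diagonals of the angulation -/
  Diag : Type
  /-- the side of a piece at each of its `m+2` cyclic positions: a diagonal or a
  boundary edge (`none`) -/
  side : Piece → ZMod (m + 2) → Option Diag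
  /-- every diagonal is a side of exactly two pieces, and those pieces are distinct -/
  occ : ∀ d : Diag, ∃ (P₁ : Piece) (i₁ : ZMod (m + 2)) (P₂ : Piece) (i₂ : ZMod (m + 2)),
    P₁ ≠ P₂ ∧ ∀ P i, side P i = some d ↔ (P = P₁ ∧ i = i₁) ∨ (P = P₂ ∧ i = i₂)

/-- The quiver `Q_T` of an `(m+2)`-angulation: vertices are the `m`-diagonals, and there
is an arrow for each pair of (cyclically) consecutive diagonal sides of a piece — i.e.
when two diagonals share an endpoint, bound the same `(m+2)`-gon, and one follows the
other clockwise. -/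
def Angulation.quiv {m : ℕ} (A : Angulation m) : Quiv where
  V := A.Diag
  E := {x : A.Piece × ZMod (m + 2) //
    (A.side x.1 x.2).isSome ∧ (A.side x.1 (x.2 + 1)).isSome}
  s := fun e => (A.side e.1.1 e.1.2).get e.2.1
  t := fun e => (A.side e.1.1 (e.1.2 + 1)).get e.2.2

/-- The relations `I_T`: a length-2 path `i → j → k` is a relation exactly when the three
diagonals bound the same `(m+2)`-gon, i.e. the two arrows come from consecutive
positions of the same piece. -/
def Angulation.rel {m : ℕ} (A : Angulation m) : Set (A.quiv.E × A.quiv.E) :=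
  {p | p.1.1.1 = p.2.1.1 ∧ p.2.1.2 = p.1.1.2 + 1}


namespace Angulation

variable {m : ℕ} (A : Angulation m)

lemma source_some (e : A.quiv.E) :
    A.side e.1.1 e.1.2 = some (A.quiv.s e) :=
  (Option.some_get e.2.1).symm

lemma target_some (e : A.quiv.E) :
    A.side e.1.1 (e.1.2 + 1) = some (A.quiv.t e) :=
  (Option.some_get e.2.2).symm

lemma pair_shift {x y : A.Piece × ZMod (m + 2)}
    (h : (x.1, x.2 + 1) = (y.1, y.2 + 1)) : x = y := by
  have h1 := congrArg Prod.fst h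
  have h2 := congrArg Prod.snd h
  simp only at h1 h2
  exact Prod.ext h1 (add_right_cancel h2)

lemma mem_pair (d : A.Diag) (x : A.Piece × ZMod (m + 2))
    (_hx : A.side x.1 x.2 = some d) :
    ∃ (P₁ : A.Piece) (i₁ : ZMod (m + 2)) (P₂ : A.Piece) (i₂ : ZMod (m + 2)),
      (∀ y : A.Piece × ZMod (m + 2), A.side y.1 y.2 = some d →
        (y = (P₁, i₁) ∨ y = (P₂, i₂))) := by
  obtain ⟨P₁, i₁, P₂, i₂, hne, h⟩ := A.occ d
  refine ⟨P₁, i₁, P₂, i₂, fun y hy => ?_⟩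
  rcases (h y.1 y.2).1 hy with ⟨h1, h2⟩ | ⟨h1, h2⟩
  · exact Or.inl (Prod.ext h1 h2)
  · exact Or.inr (Prod.ext h1 h2)

lemma two_of_three (d : A.Diag) (x y z : A.Piece × ZMod (m + 2))
    (hx : A.side x.1 x.2 = some d) (hy : A.side y.1 y.2 = some d)
    (hz : A.side z.1 z.2 = some d) : x = y ∨ x = z ∨ y = z := by
  obtain ⟨P₁, i₁, P₂, i₂, h⟩ := A.mem_pair d x hx
  rcases h x hx with rfl | rfl <;> rcases h y hy with rfl | rfl <;>
    rcases h z hz with rfl | rfl <;> tauto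

lemma unique_other (d : A.Diag) (x y z : A.Piece × ZMod (m + 2))
    (hx : A.side x.1 x.2 = some d) (hy : A.side y.1 y.2 = some d)
    (hz : A.side z.1 z.2 = some d) (hxz : x ≠ z) (hyz : y ≠ z) : x = y := by
  obtain ⟨P₁, i₁, P₂, i₂, h⟩ := A.mem_pair d x hx
  rcases h x hx with hx' | hx' <;> rcases h y hy with hy' | hy' <;>
    rcases h z hz with hz' | hz' <;> first
    | (exact hx'.trans hy'.symm)
    | (exact absurd (hx'.trans hz'.symm) hxz)
    | (exact absurd (hy'.trans hz'.symm) hyz)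

end Angulation

open Quiv in
/-- The bound quiver `(Q_T, I_T)` of an `(m+2)`-angulation is gentle, and every
saturated cycle of `(Q_T, I_T)` has length exactly `m + 2`. -/
theorem stmt19 (m : ℕ) (hm : 1 ≤ m) (A : Angulation m)
    [Finite A.Piece] [Finite A.Diag] :
    A.quiv.IsGentle A.rel ∧
    (∀ (n : ℕ) (c : Fin (n + 1) → A.quiv.E),
      A.quiv.IsSatCycle A.rel c → Function.Injective c → n + 1 = m + 2) := by
  constructor
  · constructor
    · -- compat
      rintro p ⟨h1, h2⟩
      have hs := A.source_some p.2
      have ht := A.target_some p.1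
      rw [← h1, h2] at hs
      exact Option.some.inj (ht.symm.trans hs)
    · -- g1out
      intro x a b c ha hb hc
      have Ha := A.source_some a; rw [ha] at Ha
      have Hb := A.source_some b; rw [hb] at Hb
      have Hc := A.source_some c; rw [hc] at Hc
      rcases A.two_of_three x a.1 b.1 c.1 Ha Hb Hc with h | h | h
      · exact Or.inl (Subtype.ext h)
      · exact Or.inr (Or.inl (Subtype.ext h))
      · exact Or.inr (Or.inr (Subtype.ext h))
    · -- g1in
      intro x a b c ha hb hc
      have Ha := A.target_some a; rw [ha] at Ha
      have Hb := A.target_some b; rw [hb] at Hb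
      have Hc := A.target_some c; rw [hc] at Hc
      rcases A.two_of_three x (a.1.1, a.1.2 + 1) (b.1.1, b.1.2 + 1)
          (c.1.1, c.1.2 + 1) Ha Hb Hc with h | h | h
      · exact Or.inl (Subtype.ext (A.pair_shift h))
      · exact Or.inr (Or.inl (Subtype.ext (A.pair_shift h)))
      · exact Or.inr (Or.inr (Subtype.ext (A.pair_shift h)))
    · -- g3l
      rintro β α α' ⟨h1, h2⟩ ⟨h1', h2'⟩
      refine Subtype.ext (Prod.ext (h1.trans h1'.symm) ?_)
      exact add_right_cancel ((h2.symm.trans h2'))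
    · -- g3r
      rintro β γ γ' ⟨h1, h2⟩ ⟨h1', h2'⟩
      exact Subtype.ext (Prod.ext (h1.symm.trans h1') (h2.trans h2'.symm))
    · -- g4l
      intro β α α' hα hα' hn hn'
      have Hβ := A.source_some β
      have Hα := A.target_some α; rw [hα] at Hα
      have Hα' := A.target_some α'; rw [hα'] at Hα'
      have key := A.unique_other (A.quiv.s β) (α.1.1, α.1.2 + 1)
        (α'.1.1, α'.1.2 + 1) β.1 Hα Hα' Hβ
        (fun h => by
          have h1 := congrArg Prod.fst h
          have h2 := congrArg Prod.snd h
          simp only at h1 h2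
          exact hn ⟨h1, h2.symm⟩)
        (fun h => by
          have h1 := congrArg Prod.fst h
          have h2 := congrArg Prod.snd h
          simp only at h1 h2
          exact hn' ⟨h1, h2.symm⟩)
      exact Subtype.ext (A.pair_shift key)
    · -- g4r
      intro β γ γ' hγ hγ' hn hn'
      have Hβ := A.target_some β
      have Hγ := A.source_some γ; rw [← hγ] at Hγ
      have Hγ' := A.source_some γ'; rw [← hγ'] at Hγ'
      have key := A.unique_other (A.quiv.t β) γ.1 γ'.1 (β.1.1, β.1.2 + 1)
        Hγ Hγ' Hβ
        (fun h => by
          have h1 : β.1.1 = γ.1.1 := (congrArg Prod.fst h).symm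
          have h2 : γ.1.2 = β.1.2 + 1 := congrArg Prod.snd h
          exact hn ⟨h1, h2⟩)
        (fun h => by
          have h1 : β.1.1 = γ'.1.1 := (congrArg Prod.fst h).symm
          have h2 : γ'.1.2 = β.1.2 + 1 := congrArg Prod.snd h
          exact hn' ⟨h1, h2⟩)
      exact Subtype.ext key
  · -- saturated cycles have length m + 2
    intro n c hc hinj
    have key : ∀ k : ℕ, ∀ hk : k < n + 1,
        (c ⟨k, hk⟩).1.1 = (c 0).1.1 ∧ (c ⟨k, hk⟩).1.2 = (c 0).1.2 + k := by
      intro k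
      induction k with
      | zero =>
        intro hk
        constructor
        · rfl
        · simp
      | succ k ih =>
        intro hk
        have hk' : k < n + 1 := by omega
        obtain ⟨h1, h2⟩ := ih hk'
        obtain ⟨e1, e2⟩ := (hc ⟨k, hk'⟩).2
        have hfin : (⟨k, hk'⟩ : Fin (n + 1)) + 1 = ⟨k + 1, hk⟩ := by
          ext
          simp [Fin.add_def]
          omega
        rw [hfin] at e1 e2
        refine ⟨e1.symm.trans h1, ?_⟩
        rw [e2, h2]
        push_cast
        ring
    -- wrap-around gives divisibility
    have hlast : n < n + 1 := by omega
    obtain ⟨f1, f2⟩ := (hc ⟨n, hlast⟩).2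
    have hwrap : (⟨n, hlast⟩ : Fin (n + 1)) + 1 = 0 := by
      ext
      simp [Fin.add_def]
    rw [hwrap] at f1 f2
    have hn2 := (key n hlast).2
    rw [hn2] at f2
    have hz : ((n + 1 : ℕ) : ZMod (m + 2)) = 0 := by
      push_cast
      linear_combination -f2
    have hdvd : (m + 2) ∣ (n + 1) := by
      haveI : NeZero (m + 2) := ⟨by omega⟩
      exact (ZMod.natCast_eq_zero_iff _ _).1 hz
    have hle : m + 2 ≤ n + 1 := Nat.le_of_dvd (by omega) hdvd
    by_contra hne
    have hlt : m + 2 < n + 1 := by omega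
    have hj : (c ⟨m + 2, hlt⟩) = c 0 := by
      apply Subtype.ext
      obtain ⟨g1, g2⟩ := key (m + 2) hlt
      refine Prod.ext g1 ?_
      rw [g2]
      simp [ZMod.natCast_self]
    have h0 := congrArg Fin.val (hinj hj)
    simp only [Fin.val_zero] at h0
    omega
end
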